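/- Let 𝕊 satisfy: every n-ary operation (n ≥ 1) in its signature has a unit constant (substituting the unit into all but one argument yields that argument). Let 𝕋 satisfy: any 𝕋-term equal to a term with no variables has no variables, and 𝕋 has a constant e. If 𝕌 is a composite theory of 𝕊 and 𝕋, then for any 𝕊-term s with at least one free variable, substituting e for any one of its free variables (and arbitrary 𝕌-terms for the others) yields a 𝕌-term equal to e. -/

import Mathlib

/-! ### Algebraic theories, equational logic, and composite theories -/

structure Signature where
  Op : Type
  ar : Op → Nat

inductive Term (Sg : Signature) (V : Type) : Type
  | var : V → Term Sg V
  | op : (o : Sg.Op) → (Fin (Sg.ar o) → Term Sg V) → Term Sg V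

def Term.subst {Sg : Signature} {V W : Type} : Term Sg V → (V → Term Sg W) → Term Sg W
  | .var v, f => f v
  | .op o ts, f => .op o (fun i => (ts i).subst f)

/-- Renaming of variables. -/
def Term.rename {Sg : Signature} {V W : Type} (f : V → W) (t : Term Sg V) : Term Sg W :=
  t.subst (fun v => .var (f v))

/-- The set of free variables of a term. -/
def Term.fv {Sg : Signature} {V : Type} : Term Sg V → Set V
  | .var v => {v}
  | .op _ ts => ⋃ i, (ts i).fv

/-- An algebraic theory: a signature together with a set of equations (axioms),
given as pairs of terms over the variables ℕ. -/
structure Theory where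
  sig : Signature
  Ax : Term sig Nat → Term sig Nat → Prop

/-- Provable equality in equational logic over a theory. -/
inductive Theory.Eq (T : Theory) : {V : Type} → Term T.sig V → Term T.sig V → Prop
  | ax {V : Type} {s t : Term T.sig Nat} (h : T.Ax s t) (f : Nat → Term T.sig V) :
      Theory.Eq T (s.subst f) (t.subst f)
  | refl {V : Type} (t : Term T.sig V) : Theory.Eq T t t
  | symm {V : Type} {s t : Term T.sig V} : Theory.Eq T s t → Theory.Eq T t s
  | trans {V : Type} {s t u : Term T.sig V} :
      Theory.Eq T s t → Theory.Eq T t u → Theory.Eq T s u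
  | congr {V : Type} (o : T.sig.Op) {ts ts' : Fin (T.sig.ar o) → Term T.sig V}
      (h : ∀ i, Theory.Eq T (ts i) (ts' i)) : Theory.Eq T (.op o ts) (.op o ts')
  | subst {V W : Type} {s t : Term T.sig V} (f : V → Term T.sig W) :
      Theory.Eq T s t → Theory.Eq T (s.subst f) (t.subst f)

/-- Disjoint union of two signatures. -/
def Signature.sum (A B : Signature) : Signature := ⟨A.Op ⊕ B.Op, Sum.elim A.ar B.ar⟩

/-- Embedding of terms of the first theory into the sum signature. -/
def Term.inL {A B : Signature} {V : Type} : Term A V → Term (A.sum B) V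
  | .var v => .var v
  | .op o ts => .op (Sum.inl o) (fun i => (ts i).inL)

/-- Embedding of terms of the second theory into the sum signature. -/
def Term.inR {A B : Signature} {V : Type} : Term B V → Term (A.sum B) V
  | .var v => .var v
  | .op o ts => .op (Sum.inr o) (fun i => (ts i).inR)

/-- A closed term, regarded as a term over any variable set. -/
def Term.ofClosed {Sg : Signature} {V : Type} (t : Term Sg Empty) : Term Sg V :=
  t.rename (fun x => x.elim)

/-- A candidate composite theory of `S` and `T`: a theory over the disjoint
union of the two signatures. -/
structure Composite (S T : Theory) where
  Ax : Term (S.sig.sum T.sig) Nat → Term (S.sig.sum T.sig) Nat → Prop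

def Composite.U {S T : Theory} (C : Composite S T) : Theory := ⟨S.sig.sum T.sig, C.Ax⟩

/-- A separated term: a `T`-term with `S`-terms substituted for its variables. -/
def sep {S T : Theory} {V : Type} (t : Term T.sig Nat) (σ : Nat → Term S.sig V) :
    Term (S.sig.sum T.sig) V :=
  (Term.inR (A := S.sig) t).subst (fun n => Term.inL (σ n))

/-- `C` is a composite theory of `S` and `T` in the sense of Pirog–Staton:
it contains both theories, and satisfies separation and essential uniqueness. -/
structure IsComposite {S T : Theory} (C : Composite S T) : Prop where
  containsS : ∀ {V : Type} (s s' : Term S.sig V), S.Eq s s' → C.U.Eq s.inL s'.inL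
  containsT : ∀ {V : Type} (t t' : Term T.sig V), T.Eq t t' → C.U.Eq t.inR t'.inR
  separation : ∀ {V : Type} (u : Term (S.sig.sum T.sig) V),
      ∃ (t : Term T.sig Nat) (σ : Nat → Term S.sig V), C.U.Eq u (sep t σ)
  essUniq : ∀ {V : Type} (t t' : Term T.sig Nat) (σ σ' : Nat → Term S.sig V),
      C.U.Eq (sep t σ) (sep t' σ') →
      ∃ (Z : Type) (f g : Nat → Z),
        T.Eq (t.rename f) (t'.rename g) ∧
        (∀ i j, f i = f j ↔ S.Eq (σ i) (σ j)) ∧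
        (∀ i j, g i = g j ↔ S.Eq (σ' i) (σ' j)) ∧
        (∀ i j, f i = g j ↔ S.Eq (σ i) (σ' j))

/-- Property: any term provably equal to a variable-free term is variable-free. -/
def VarFree0 (T : Theory) : Prop :=
  ∀ (V : Type) (t t' : Term T.sig V), t.fv = ∅ → T.Eq t t' → t'.fv = ∅

/-- Property: any term provably equal to a variable `x` has free variables `⊆ {x}`. -/
def VarSingle (T : Theory) : Prop :=
  ∀ (V : Type) (x : V) (t : Term T.sig V), T.Eq t (.var x) → t.fv ⊆ {x}

/-- Property: every operation of positive arity has a unit constant. -/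
def HasUnits (S : Theory) : Prop :=
  ∀ o : S.sig.Op, 1 ≤ S.sig.ar o →
    ∃ e : Term S.sig Empty, ∀ k : Fin (S.sig.ar o),
      S.Eq (.op o (fun i => if i = k then .var (0 : Nat) else e.ofClosed)) (.var 0)

/-- Application of a term with (at most) free variables `0, 1` to two arguments. -/
def app2 {Sg : Signature} {V : Type} (t : Term Sg Nat) (A B : Term Sg V) : Term Sg V :=
  t.subst (fun n => if n = 0 then A else B)

/-!
By induction on `s` it suffices that `e` absorbs an `𝕊`-operation `o` in the argument position `j`
where `o` has a unit `c`, and for this it suffices to treat `P = o(x₀, …, e, …, xₙ₋₁)`, with `e` in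
position `j` and distinct variables elsewhere. Substituting `c` for every variable turns `P` into
`o(c, …, e, …, c) = e`. Separate `P = t[σ]`; then `t[σ[c/x]] = e`, and essential uniqueness makes a
renaming of `t` `𝕋`-equal to the closed term `e`, so `t` is closed by `VarFree0`. Hence
`P = t[σ] = t[σ[c/x]] = e`.
-/

namespace Term

variable {Sg : Signature}

theorem subst_subst {V W X : Type} (t : Term Sg V) (f : V → Term Sg W) (g : W → Term Sg X) :
    (t.subst f).subst g = t.subst fun v => (f v).subst g := by
  induction t with
  | var v => rfl
  | op o ts ih => exact congrArg (Term.op o) (funext ih)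

theorem subst_congr {V W : Type} {t : Term Sg V} {f g : V → Term Sg W}
    (h : ∀ v ∈ t.fv, f v = g v) : t.subst f = t.subst g := by
  induction t with
  | var v => exact h v rfl
  | op o ts ih =>
    exact congrArg (Term.op o) (funext fun i => ih i fun v hv => h v (Set.mem_iUnion_of_mem i hv))

theorem fv_rename {V W : Type} (f : V → W) (t : Term Sg V) : (t.rename f).fv = f '' t.fv := by
  induction t with
  | var v => simp [rename, subst, fv]
  | op o ts ih =>
    simp only [rename, subst, fv, Set.image_iUnion] at ih ⊢
    exact congrArg Set.iUnion (funext ih)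

theorem ofClosed_subst {V W : Type} (t : Term Sg Empty) (f : V → Term Sg W) :
    (t.ofClosed : Term Sg V).subst f = t.ofClosed := by
  rw [ofClosed, rename, subst_subst]
  exact subst_congr fun v => v.elim

theorem fv_ofClosed {V : Type} (t : Term Sg Empty) : (t.ofClosed : Term Sg V).fv = ∅ := by
  rw [ofClosed, fv_rename, Set.image_eq_empty]
  exact Set.eq_empty_of_isEmpty _

variable {A B : Signature}

theorem inL_subst {V W : Type} (t : Term A V) (f : V → Term A W) :
    (t.inL (B := B)).subst (fun v => (f v).inL) = (t.subst f).inL := by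
  induction t with
  | var v => rfl
  | op o ts ih => exact congrArg (Term.op _) (funext ih)

theorem inR_subst {V W : Type} (t : Term B V) (f : V → Term B W) :
    (t.inR (A := A)).subst (fun v => (f v).inR) = (t.subst f).inR := by
  induction t with
  | var v => rfl
  | op o ts ih => exact congrArg (Term.op _) (funext ih)

theorem inL_ofClosed {V : Type} (t : Term A Empty) :
    (t.ofClosed : Term A V).inL = (t.inL (B := B)).ofClosed :=
  (inL_subst t _).symm

theorem inR_ofClosed {V : Type} (t : Term B Empty) :
    (t.ofClosed : Term B V).inR = (t.inR (A := A)).ofClosed :=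
  (inR_subst t _).symm

theorem subst_inR_ofClosed {V W : Type} (t : Term B Empty) (f : V → Term (A.sum B) W) :
    (t.ofClosed : Term B V).inR.subst f = t.ofClosed.inR := by
  rw [inR_ofClosed, ofClosed_subst, inR_ofClosed]

theorem fv_inR {V : Type} (t : Term B V) : (t.inR (A := A)).fv = t.fv := by
  induction t with
  | var v => rfl
  | op o ts ih => exact congrArg Set.iUnion (funext ih)

end Term

section Separation

variable {S T : Theory} {V : Type}

theorem sep_subst_inL (t : Term T.sig Nat) (σ : Nat → Term S.sig V) (φ : V → Term S.sig V) :
    (sep t σ).subst (fun v => (φ v).inL) = sep t fun n => (σ n).subst φ := by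
  simp only [sep, Term.subst_subst, Term.inL_subst]

theorem sep_ofClosed (e : Term T.sig Empty) (σ : Nat → Term S.sig V) :
    sep e.ofClosed σ = (e.ofClosed : Term T.sig V).inR := by
  rw [sep, Term.inR_ofClosed, Term.ofClosed_subst, Term.inR_ofClosed]

theorem sep_congr_of_fv_eq_empty {t : Term T.sig Nat} (ht : t.fv = ∅) (σ σ' : Nat → Term S.sig V) :
    sep t σ = sep t σ' :=
  Term.subst_congr fun n hn => by simp [Term.fv_inR, ht] at hn

end Separation

namespace IsComposite

variable {S T : Theory} {C : Composite S T} {V : Type}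

theorem fv_eq_empty_of_sep_eq_const (hC : IsComposite C) (hT0 : VarFree0 T)
    (e : Term T.sig Empty) {t : Term T.sig Nat} {σ : Nat → Term S.sig V}
    (h : C.U.Eq (sep t σ) (e.ofClosed : Term T.sig V).inR) : t.fv = ∅ := by
  rw [← sep_ofClosed e σ] at h
  obtain ⟨Z, f, g, hT, -⟩ := hC.essUniq _ _ _ _ h
  have he : ((e.ofClosed : Term T.sig Nat).rename g).fv = ∅ := by
    rw [Term.rename, Term.ofClosed_subst]
    exact Term.fv_ofClosed e
  rw [← Set.image_eq_empty (f := f), ← Term.fv_rename]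
  exact hT0 Z _ _ he hT.symm

theorem eq_const_of_subst_inL_eq_const (hC : IsComposite C) (hT0 : VarFree0 T)
    (e : Term T.sig Empty) (u : Term (S.sig.sum T.sig) V) (φ : V → Term S.sig V)
    (h : C.U.Eq (u.subst fun v => (φ v).inL) (e.ofClosed : Term T.sig V).inR) :
    C.U.Eq u (e.ofClosed : Term T.sig V).inR := by
  obtain ⟨t, σ, hu⟩ := hC.separation u
  have hsep : C.U.Eq (sep t fun n => (σ n).subst φ) (e.ofClosed : Term T.sig V).inR := by
    rw [← sep_subst_inL]
    exact ((hu.subst _).symm).trans h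
  rw [sep_congr_of_fv_eq_empty (hC.fv_eq_empty_of_sep_eq_const hT0 e hsep) σ] at hu
  exact hu.trans hsep

theorem op_var_eq_const_of_unit (hC : IsComposite C) (hT0 : VarFree0 T)
    (e : Term T.sig Empty) {o : S.sig.Op} {j : Fin (S.sig.ar o)} {c : Term S.sig Empty}
    (hc : S.Eq (.op o (fun i => if i = j then .var (0 : Nat) else c.ofClosed)) (.var 0)) :
    C.U.Eq (Term.op (Sg := S.sig.sum T.sig) (Sum.inl o) fun (i : Fin (S.sig.ar o)) =>
        if i = j then (e.ofClosed : Term T.sig (Fin (S.sig.ar o))).inR else .var i)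
      (e.ofClosed : Term T.sig (Fin (S.sig.ar o))).inR := by
  refine hC.eq_const_of_subst_inL_eq_const hT0 e _ (fun _ => c.ofClosed) ?_
  have hunit_inst : (Term.inL (B := T.sig) (.op o fun i => if i = j then .var 0 else c.ofClosed)).subst
        (fun _ => (e.ofClosed : Term T.sig (Fin (S.sig.ar o))).inR) =
      (Term.op (Sg := S.sig.sum T.sig) (Sum.inl o) fun (i : Fin (S.sig.ar o)) =>
        if i = j then (e.ofClosed : Term T.sig (Fin (S.sig.ar o))).inR else .var i).subst
          fun _ => (c.ofClosed : Term S.sig (Fin (S.sig.ar o))).inL := by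
    refine congrArg (Term.op _) (funext fun (i : Fin (S.sig.ar o)) => ?_)
    by_cases hi : i = j <;>
      simp [hi, Term.subst, Term.inL, Term.subst_inR_ofClosed, Term.inL_ofClosed, Term.ofClosed_subst]
  exact hunit_inst ▸ (hC.containsS _ _ hc).subst fun _ => (e.ofClosed : Term T.sig _).inR

theorem op_eq_const_of_unit (hC : IsComposite C) (hT0 : VarFree0 T) (e : Term T.sig Empty)
    {o : S.sig.Op} {j : Fin (S.sig.ar o)} {c : Term S.sig Empty}
    (hc : S.Eq (.op o (fun i => if i = j then .var (0 : Nat) else c.ofClosed)) (.var 0))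
    {B : Fin (S.sig.ar o) → Term (S.sig.sum T.sig) V}
    (hB : C.U.Eq (B j) (e.ofClosed : Term T.sig V).inR) :
    C.U.Eq (.op (Sum.inl o) B) (e.ofClosed : Term T.sig V).inR := by
  have hB' : C.U.Eq (.op (Sum.inl o) B) (.op (Sum.inl o) fun (i : Fin (S.sig.ar o)) =>
      if i = j then (e.ofClosed : Term T.sig V).inR else B i) := by
    refine Theory.Eq.congr _ fun (i : Fin (S.sig.ar o)) => ?_
    by_cases hi : i = j
    · subst hi
      simpa using hB
    · simpa [hi] using Theory.Eq.refl (T := C.U) (B i)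
  have hvar : C.U.Eq
      ((Term.op (Sg := S.sig.sum T.sig) (Sum.inl o) fun (i : Fin (S.sig.ar o)) =>
        if i = j then (e.ofClosed : Term T.sig (Fin (S.sig.ar o))).inR else .var i).subst B)
      ((e.ofClosed : Term T.sig (Fin (S.sig.ar o))).inR.subst B) :=
    (hC.op_var_eq_const_of_unit hT0 e hc).subst B
  simp only [Term.subst, apply_ite (Term.subst · B), Term.subst_inR_ofClosed] at hvar
  exact hB'.trans hvar

end IsComposite

/-- **Multiplicative zero theorem.** Suppose every positive-arity operation of `𝕊`
has a unit constant, and in `𝕋` any term equal to a variable-free term is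
variable-free, with `e` a constant (closed term) of `𝕋`. Then in any composite
theory `𝕌` of `𝕊` and `𝕋`, any `𝕊`-term `s` with at least one free variable, with
`e` substituted for one of its free variables (and arbitrary `𝕌`-terms for the
others), is equal to `e` in `𝕌`. -/
theorem composite_multiplicative_zero (S T : Theory)
    (hS : HasUnits S) (hT0 : VarFree0 T) (e : Term T.sig Empty)
    (C : Composite S T) (hC : IsComposite C) :
    ∀ (V : Type) (s : Term S.sig Nat) (k : Nat), k ∈ s.fv →
      ∀ u : Nat → Term (S.sig.sum T.sig) V, u k = (Term.ofClosed (V := V) e).inR →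
        C.U.Eq ((s.inL).subst u) ((Term.ofClosed (V := V) e).inR) := by
  intro V s k hk u hu
  induction s with
  | var v =>
    rw [Term.fv, Set.mem_singleton_iff] at hk
    subst hk
    exact hu ▸ Theory.Eq.refl _
  | op o ts ih =>
    obtain ⟨j, hj⟩ := Set.mem_iUnion.1 hk
    obtain ⟨c, hc⟩ := hS o j.pos
    exact hC.op_eq_const_of_unit hT0 e (hc j) (ih j hj)
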